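/- arXiv:2101.09847 — 2 statements merged into one kernel-verified Lean document; each statement's English description precedes it below -/
import Mathlib

section
/- There exists a probability space and random variables ρ ≥ 0 with E[ρ] = 1 and G such that the sample variance of the importance-weighted returns, σ̂²!! := (1/(n−1)) ∑_{i=1}^n (ρ_i G_i − (1/n)∑_j ρ_j G_j)², computed from n = 2 i.i.d. copies, has expectation different from Var_π(G) := E[ρG²] − E[ρG]². Concretely: take ρ taking value 2 with probability 1/2 (with G = 1) and value 0 with probability 1/2 (with G = 0); then Var_π(G) = 0 but E[σ̂²!!] = 1. -/
open MeasureTheory ProbabilityTheory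
open scoped ENNReal

noncomputable def μb : Measure Bool := (PMF.uniformOfFintype Bool).toMeasure

instance : IsProbabilityMeasure μb := PMF.toMeasure.isProbabilityMeasure _

lemma μb_singleton (b : Bool) : μb {b} = 2⁻¹ := by
  rw [μb, PMF.toMeasure_apply_singleton _ _ (measurableSet_singleton _)]
  simp [PMF.uniformOfFintype_apply]

noncomputable def Pm : Measure (Fin 2 → Bool) := Measure.pi (fun _ => μb)

instance : IsProbabilityMeasure Pm := by unfold Pm; infer_instance

lemma Pm_eval (i : Fin 2) (s : Set Bool) :
    Pm ((fun ω : Fin 2 → Bool => ω i) ⁻¹' s) = μb s := by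
  have h : (fun ω : Fin 2 → Bool => ω i) ⁻¹' s
      = Set.pi Set.univ (fun j => if j = i then s else Set.univ) := by
    ext ω
    simp only [Set.mem_preimage, Set.mem_univ_pi]
    constructor
    · intro h j; split_ifs with hj; · subst hj; exact h
      · trivial
    · intro h; have := h i; simpa using this
  rw [h, Pm, Measure.pi_pi]
  have huniv : μb {false, true} = 1 := by
    rw [show ({false, true} : Set Bool) = Set.univ from by ext b; cases b <;> simp]
    exact measure_univ
  fin_cases i <;>
  · rw [Fin.prod_univ_two]
    norm_num [huniv]

lemma Pm_singleton (ω : Fin 2 → Bool) : Pm {ω} = 4⁻¹ := by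
  have h : ({ω} : Set (Fin 2 → Bool)) = Set.pi Set.univ (fun j => {ω j}) := by
    ext x; simp [funext_iff, Set.mem_univ_pi]
  rw [h, Pm, Measure.pi_pi, Fin.prod_univ_two, μb_singleton, μb_singleton,
    ← ENNReal.mul_inv (by norm_num) (by norm_num)]
  norm_num

lemma Pm_integral (f : (Fin 2 → Bool) → ℝ) :
    ∫ ω, f ω ∂Pm = (4:ℝ)⁻¹ * (f ![true,true] + f ![true,false] + f ![false,true] + f ![false,false]) := by
  rw [integral_fintype (Integrable.of_finite)]
  simp only [Measure.real]
  rw [← Equiv.sum_comp (piFinTwoEquiv fun _ => Bool).symm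
    (fun ω => (Pm {ω}).toReal • f ω)]
  simp only [Pm_singleton]
  rw [Fintype.sum_prod_type]
  simp only [Fintype.sum_bool, piFinTwoEquiv, Equiv.coe_fn_symm_mk]
  have h2 : ∀ a b : Bool, (Fin.cons a (Fin.cons b finZeroElim) : Fin 2 → Bool) = ![a, b] := by
    intro a b; ext i; fin_cases i <;> rfl
  rw [h2, h2, h2, h2]
  have : ((4:ℝ≥0∞)⁻¹).toReal = (4:ℝ)⁻¹ := by simp
  rw [this]
  simp only [smul_eq_mul]
  ring

/-- The naive sample variance of importance-weighted returns can be biased: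
there is a probability space and i.i.d. pairs (ρ, G) with ρ ≥ 0, E[ρ] = 1,
target variance E[ρG²] − (E[ρG])² = 0, yet the (Bessel-corrected, n = 2)
sample variance of the weighted returns has expectation 1. -/
theorem stmt_3 :
    ∃ (Ω : Type) (_ : MeasurableSpace Ω) (P : Measure Ω) (_ : IsProbabilityMeasure P)
      (ρ G : Fin 2 → Ω → ℝ),
      iIndepFun (fun i ω => (ρ i ω, G i ω)) P ∧
      (∀ i, IdentDistrib (fun ω => (ρ i ω, G i ω)) (fun ω => (ρ 0 ω, G 0 ω)) P P) ∧
      (∀ i, ∀ᵐ ω ∂P, 0 ≤ ρ i ω) ∧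
      (∀ i, ∫ ω, ρ i ω ∂P = 1) ∧
      (∀ i, P {ω | ρ i ω = 2 ∧ G i ω = 1} = 1/2 ∧ P {ω | ρ i ω = 0 ∧ G i ω = 0} = 1/2) ∧
      (∫ ω, ρ 0 ω * (G 0 ω) ^ 2 ∂P - (∫ ω, ρ 0 ω * G 0 ω ∂P) ^ 2 = 0) ∧
      (∫ ω, ∑ i, (ρ i ω * G i ω - (1 / 2) * ∑ j, ρ j ω * G j ω) ^ 2 ∂P = 1) := by
  classical
  refine ⟨Fin 2 → Bool, inferInstance, Pm, inferInstance,
    fun i ω => if ω i then 2 else 0, fun i ω => if ω i then 1 else 0, ?_, ?_, ?_, ?_, ?_, ?_, ?_⟩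
  case _ =>
    -- independence
    have hcoord : iIndepFun
        (fun i (ω : Fin 2 → Bool) => ω i) Pm := by
      rw [iIndepFun_iff_measure_inter_preimage_eq_mul]
      intro S sets _
      have h1 : (⋂ i ∈ S, (fun ω : Fin 2 → Bool => ω i) ⁻¹' sets i)
          = Set.pi Set.univ (fun i => if i ∈ S then sets i else Set.univ) := by
        ext ω
        simp only [Set.mem_iInter, Set.mem_preimage, Set.mem_univ_pi]
        constructor
        · intro h i; split_ifs with hi
          · exact h i hi
          · trivial
        · intro h i hi; have := h i; rwa [if_pos hi] at this
      simp only [Pm_eval]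
      rw [h1]
      show Measure.pi _ _ = _
      rw [Measure.pi_pi]
      rw [← Finset.prod_subset (Finset.subset_univ S)
        (fun i _ hi => by rw [if_neg hi, measure_univ])]
      exact Finset.prod_congr rfl fun i hi => by rw [if_pos hi]
    have hg : Measurable (fun b : Bool => ((if b then (2:ℝ) else 0), (if b then (1:ℝ) else 0))) :=
      measurable_of_countable _
    exact hcoord.comp _ (fun _ => hg)
  case _ =>
    -- identically distributed
    have hg : Measurable (fun b : Bool => ((if b then (2:ℝ) else 0), (if b then (1:ℝ) else 0))) :=
      measurable_of_countable _
    have hmap : ∀ i : Fin 2, Measure.map (fun ω : Fin 2 → Bool => ω i) Pm = μb := by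
      intro i
      refine Measure.ext fun s hs => ?_
      rw [Measure.map_apply (measurable_pi_apply i) hs, Pm_eval]
    intro i
    refine ⟨(hg.comp (measurable_pi_apply i)).aemeasurable,
      (hg.comp (measurable_pi_apply 0)).aemeasurable, ?_⟩
    show Measure.map ((fun b : Bool => ((if b then (2:ℝ) else 0), (if b then (1:ℝ) else 0)))
        ∘ (fun ω : Fin 2 → Bool => ω i)) Pm
      = Measure.map ((fun b : Bool => ((if b then (2:ℝ) else 0), (if b then (1:ℝ) else 0)))
        ∘ (fun ω : Fin 2 → Bool => ω 0)) Pm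
    rw [← Measure.map_map hg (measurable_pi_apply i), hmap,
      ← Measure.map_map hg (measurable_pi_apply 0), hmap]
  case _ =>
    intro i
    filter_upwards with ω
    split_ifs <;> norm_num
  case _ =>
    intro i
    rw [Pm_integral]
    fin_cases i <;> norm_num
  case _ =>
    intro i
    constructor
    · have h1 : {ω : Fin 2 → Bool | (if ω i then (2:ℝ) else 0) = 2 ∧ (if ω i then (1:ℝ) else 0) = 1}
          = (fun ω : Fin 2 → Bool => ω i) ⁻¹' {true} := by
        ext ω; simp only [Set.mem_setOf_eq, Set.mem_preimage, Set.mem_singleton_iff]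
        cases h : ω i <;> simp
      rw [h1, Pm_eval, μb_singleton, one_div]
    · have h1 : {ω : Fin 2 → Bool | (if ω i then (2:ℝ) else 0) = 0 ∧ (if ω i then (1:ℝ) else 0) = 0}
          = (fun ω : Fin 2 → Bool => ω i) ⁻¹' {false} := by
        ext ω; simp only [Set.mem_setOf_eq, Set.mem_preimage, Set.mem_singleton_iff]
        cases h : ω i <;> simp
      rw [h1, Pm_eval, μb_singleton, one_div]
  case _ =>
    rw [Pm_integral, Pm_integral]
    norm_num
  case _ =>
    rw [Pm_integral]
    simp only [Fin.sum_univ_two]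
    norm_num
end

section
/- There exists a probability space and random variables ρ ≥ 0 with E[ρ] = 1 and G such that σ̂²! := (1/(n−1)) ∑_{i=1}^n ρ_i (G_i − (1/n)∑_j ρ_j G_j)² with n = 2 i.i.d. copies has expectation 1 while the target variance E[ρG²] − E[ρG]² equals 0. Concretely, use (ρ, G) = (2, 1) with probability 1/2 and (0, 0) with probability 1/2. -/
open MeasureTheory ProbabilityTheory
open scoped ENNReal

namespace Stmt4Aux

noncomputable def μB : Measure Bool := (2:ℝ≥0∞)⁻¹ • (Measure.dirac true + Measure.dirac false)

lemma μB_singleton (b : Bool) : μB {b} = 2⁻¹ := by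
  cases b <;>
    simp [μB, Measure.dirac_apply' _ (measurableSet_singleton _)]

instance : IsProbabilityMeasure μB := by
  constructor
  simp only [μB, Measure.coe_smul, Measure.coe_add, Pi.smul_apply, Pi.add_apply,
    Measure.dirac_apply' _ MeasurableSet.univ, Set.indicator_univ, Pi.one_apply, smul_eq_mul]
  rw [show (1:ℝ≥0∞) + 1 = 2 by norm_num, ENNReal.inv_mul_cancel] <;> norm_num

noncomputable def P : Measure (Fin 2 → Bool) := Measure.pi (fun _ => μB)

instance : IsProbabilityMeasure P := by unfold P; infer_instance

lemma map_eval (i : Fin 2) : P.map (Function.eval i) = μB := by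
  classical
  ext s hs
  rw [Measure.map_apply (measurable_pi_apply i) hs, Set.eval_preimage, P, Measure.pi_pi]
  rw [Fintype.prod_eq_single i (fun j hj => by rw [Function.update_of_ne hj]; exact measure_univ)]
  simp

lemma P_singleton (x : Fin 2 → Bool) : P {x} = 4⁻¹ := by
  rw [← Set.univ_pi_singleton, P, Measure.pi_pi]
  simp only [μB_singleton, Finset.prod_const, Finset.card_univ, Fintype.card_fin]
  rw [pow_two, ← ENNReal.mul_inv (by norm_num) (by norm_num)]
  norm_num

lemma indep_eval :
    iIndepFun
      (fun i (ω : Fin 2 → Bool) => ω i) P := by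
  rw [iIndepFun_iff_measure_inter_preimage_eq_mul]
  intro S sets hsets
  classical
  have h1 : (⋂ i ∈ S, (fun ω : Fin 2 → Bool => ω i) ⁻¹' sets i) = Set.pi ↑S sets := by
    ext ω; simp [Set.mem_pi]
  have h2 : ∀ i ∈ S, P ((fun ω : Fin 2 → Bool => ω i) ⁻¹' sets i) = μB (sets i) := by
    intro i hi
    rw [← map_eval i, Measure.map_apply (measurable_pi_apply i) (hsets i hi)]
  rw [h1, ← Set.pi_univ_ite]
  conv_lhs => rw [P, Measure.pi_pi]
  calc (∏ j : Fin 2, μB (if j ∈ (↑S : Set (Fin 2)) then sets j else Set.univ))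
      = ∏ j ∈ S, μB (sets j) := by
        rw [← Finset.prod_subset (Finset.subset_univ S)
          (fun x _ hx => by rw [if_neg (by simpa using hx)]; exact measure_univ)]
        exact Finset.prod_congr rfl (fun j hj => by simp [hj])
    _ = ∏ j ∈ S, P ((fun ω : Fin 2 → Bool => ω j) ⁻¹' sets j) :=
        Finset.prod_congr rfl (fun j hj => (h2 j hj).symm)

def pt (a b : Bool) : Fin 2 → Bool := ![a, b]

lemma integral_P (f : (Fin 2 → Bool) → ℝ) :
    ∫ ω, f ω ∂P
      = (f (pt true true) + f (pt true false) + f (pt false true) + f (pt false false)) / 4 := by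
  rw [integral_fintype (Integrable.of_finite)]
  simp_rw [Measure.real, P_singleton]
  rw [Fintype.sum_equiv (piFinTwoEquiv fun _ => Bool) _
    (fun p => ((4:ℝ≥0∞)⁻¹).toReal • f (pt p.1 p.2)) ?_]
  · rw [Fintype.sum_prod_type]
    simp only [Fintype.sum_bool, smul_eq_mul]
    rw [show ((4:ℝ≥0∞)⁻¹).toReal = 1/4 by simp [ENNReal.toReal_inv]]
    ring
  · intro x
    have hx : x = pt (x 0) (x 1) := by
      funext j; fin_cases j <;> rfl
    simp only [piFinTwoEquiv_apply]
    rw [← hx]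

noncomputable def gB : Bool → ℝ × ℝ := fun b => ((if b then 2 else 0), (if b then 1 else 0))

lemma gB_meas : Measurable gB := Measurable.of_discrete

end Stmt4Aux

open Stmt4Aux

/-- The plug-in weighted variance estimator with Bessel's correction can be
biased: there exist i.i.d. pairs (ρ, G) with ρ ≥ 0, E[ρ] = 1, target variance
E[ρG²] − (E[ρG])² = 0, yet the n = 2 estimator has expectation 1. -/
theorem stmt_4 :
    ∃ (Ω : Type) (_ : MeasurableSpace Ω) (P : Measure Ω) (_ : IsProbabilityMeasure P)
      (ρ G : Fin 2 → Ω → ℝ),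
      iIndepFun (fun i ω => (ρ i ω, G i ω)) P ∧
      (∀ i, IdentDistrib (fun ω => (ρ i ω, G i ω)) (fun ω => (ρ 0 ω, G 0 ω)) P P) ∧
      (∀ i, ∀ᵐ ω ∂P, 0 ≤ ρ i ω) ∧
      (∀ i, ∫ ω, ρ i ω ∂P = 1) ∧
      (∀ i, P {ω | ρ i ω = 2 ∧ G i ω = 1} = 1/2 ∧ P {ω | ρ i ω = 0 ∧ G i ω = 0} = 1/2) ∧
      (∫ ω, ρ 0 ω * (G 0 ω) ^ 2 ∂P - (∫ ω, ρ 0 ω * G 0 ω ∂P) ^ 2 = 0) ∧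
      (∫ ω, ∑ i, ρ i ω * (G i ω - (1 / 2) * ∑ j, ρ j ω * G j ω) ^ 2 ∂P = 1) := by
  classical
  refine ⟨Fin 2 → Bool, inferInstance, P, inferInstance,
    fun i ω => if ω i then 2 else 0, fun i ω => if ω i then 1 else 0, ?_, ?_, ?_, ?_, ?_, ?_, ?_⟩
  · -- independence
    exact indep_eval.comp (fun _ => gB) (fun _ => gB_meas)
  · -- identically distributed
    intro i
    refine ⟨Measurable.aemeasurable (gB_meas.comp (measurable_pi_apply i)),
      Measurable.aemeasurable (gB_meas.comp (measurable_pi_apply 0)), ?_⟩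
    show P.map (gB ∘ Function.eval i) = P.map (gB ∘ Function.eval 0)
    rw [← Measure.map_map gB_meas (measurable_pi_apply i),
      ← Measure.map_map gB_meas (measurable_pi_apply 0), map_eval, map_eval]
  · -- nonneg
    intro i
    filter_upwards with ω
    split <;> norm_num
  · -- mean 1
    intro i
    rw [integral_P]
    fin_cases i <;> norm_num [pt]
  · -- point probabilities
    intro i
    constructor
    · have h : {ω : Fin 2 → Bool |
          (if ω i then (2:ℝ) else 0) = 2 ∧ (if ω i then (1:ℝ) else 0) = 1}
          = Function.eval i ⁻¹' ({true} : Set Bool) := by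
        ext ω; cases h : ω i <;> simp [Function.eval, h]
      rw [h, ← Measure.map_apply (measurable_pi_apply i) (measurableSet_singleton _),
        map_eval, μB_singleton]
      norm_num
    · have h : {ω : Fin 2 → Bool |
          (if ω i then (2:ℝ) else 0) = 0 ∧ (if ω i then (1:ℝ) else 0) = 0}
          = Function.eval i ⁻¹' ({false} : Set Bool) := by
        ext ω; cases h : ω i <;> simp [Function.eval, h]
      rw [h, ← Measure.map_apply (measurable_pi_apply i) (measurableSet_singleton _),
        map_eval, μB_singleton]
      norm_num
  · -- zero variance
    rw [integral_P, integral_P]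
    norm_num [pt]
  · -- estimator expectation 1
    rw [integral_P]
    norm_num [pt, Fin.sum_univ_two]
end
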